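/- arXiv:1110.5719 — 2 statements merged into one kernel-verified Lean document; each statement's English description precedes it below -/
import Mathlib

section
/- Let (k₁,k₂,k₃,k₄) ∈ ℤ⁴. Then k₁ - k₂ + k₃ - k₄ = 0 and |k₁| - |k₂| + |k₃| - |k₄| = 0 hold if and only if at least one of the following holds: (1) all kⱼ ≥ 0; (2) all kⱼ ≤ 0; (3) k₁ = k₂ and k₃ = k₄; (4) k₁ = k₄ and k₃ = k₂. -/
/-!
Squaring `|a| + |c| = |b| + |d|` and `a + c = b + d` and subtracting gives
`|ac| - ac = |bd| - bd`. Either both products are nonnegative, and then each of the pairs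
`(a, c)`, `(b, d)` has a common sign, which the equal sums force to be the same; or both are
negative and equal, and then `{a, c}` and `{b, d}` are the root sets of the same monic quadratic.
-/

section Resonance

variable {R : Type*}

theorem eq_and_eq_or_eq_and_eq_of_add_eq_add_of_mul_eq_mul [CommRing R] [NoZeroDivisors R]
    {a b c d : R} (hs : a + c = b + d) (hp : a * c = b * d) :
    a = b ∧ c = d ∨ a = d ∧ c = b := by
  have hroot : (a - b) * (a - d) = 0 := by
    linear_combination a * hs - hp
  rcases mul_eq_zero.1 hroot with hab | had
  · left
    have hab : a = b := sub_eq_zero.1 hab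
    exact ⟨hab, by linear_combination hs - hab⟩
  · right
    have had : a = d := sub_eq_zero.1 had
    exact ⟨had, by linear_combination hs - had⟩

variable [CommRing R] [LinearOrder R] [IsStrictOrderedRing R] {a b c d : R}

theorem abs_mul_sub_mul_eq_of_add_eq_add_of_abs_add_abs_eq (hs : a + c = b + d)
    (habs : |a| + |c| = |b| + |d|) : |a * c| - a * c = |b * d| - b * d := by
  have hsq : (|a| + |c|) ^ 2 - (a + c) ^ 2 = (|b| + |d|) ^ 2 - (b + d) ^ 2 := by rw [hs, habs]
  simp only [add_sq, sq_abs, abs_mul] at hsq ⊢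
  linarith

theorem all_nonneg_or_all_nonpos_of_add_eq_add (hs : a + c = b + d)
    (hac : 0 ≤ a * c) (hbd : 0 ≤ b * d) :
    (0 ≤ a ∧ 0 ≤ b ∧ 0 ≤ c ∧ 0 ≤ d) ∨ (a ≤ 0 ∧ b ≤ 0 ∧ c ≤ 0 ∧ d ≤ 0) := by
  rcases mul_nonneg_iff.1 hac with ⟨ha, hc⟩ | ⟨ha, hc⟩ <;>
    rcases mul_nonneg_iff.1 hbd with ⟨hb, hd⟩ | ⟨hb, hd⟩
  · exact .inl ⟨ha, hb, hc, hd⟩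
  · exact .inr ⟨by linarith, hb, by linarith, hd⟩
  · exact .inl ⟨by linarith, hb, by linarith, hd⟩
  · exact .inr ⟨ha, hb, hc, hd⟩

theorem resonant_of_abs_add_abs_eq (hs : a + c = b + d) (habs : |a| + |c| = |b| + |d|) :
    (0 ≤ a ∧ 0 ≤ b ∧ 0 ≤ c ∧ 0 ≤ d) ∨ (a ≤ 0 ∧ b ≤ 0 ∧ c ≤ 0 ∧ d ≤ 0) ∨
      (a = b ∧ c = d) ∨ (a = d ∧ c = b) := by
  have hdefect := abs_mul_sub_mul_eq_of_add_eq_add_of_abs_add_abs_eq hs habs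
  rcases le_or_gt 0 (a * c) with hac | hac
  · have hbd : 0 ≤ b * d := by
      rw [abs_of_nonneg hac, sub_self, eq_comm, sub_eq_zero] at hdefect
      exact abs_eq_self.1 hdefect
    exact (all_nonneg_or_all_nonpos_of_add_eq_add hs hac hbd).imp_right .inl
  · have hbd : b * d < 0 := by
      by_contra! hbd
      rw [abs_of_nonneg hbd, abs_of_neg hac] at hdefect
      linarith
    rw [abs_of_neg hac, abs_of_neg hbd] at hdefect
    exact .inr (.inr (eq_and_eq_or_eq_and_eq_of_add_eq_add_of_mul_eq_mul hs (by linarith)))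

theorem abs_add_abs_eq_of_resonant
    (h : (0 ≤ a ∧ 0 ≤ b ∧ 0 ≤ c ∧ 0 ≤ d) ∨ (a ≤ 0 ∧ b ≤ 0 ∧ c ≤ 0 ∧ d ≤ 0) ∨
      (a = b ∧ c = d) ∨ (a = d ∧ c = b)) (hs : a + c = b + d) :
    |a| + |c| = |b| + |d| := by
  rcases h with ⟨ha, hb, hc, hd⟩ | ⟨ha, hb, hc, hd⟩ | ⟨rfl, rfl⟩ | ⟨rfl, rfl⟩
  · rw [abs_of_nonneg ha, abs_of_nonneg hb, abs_of_nonneg hc, abs_of_nonneg hd, hs]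
  · rw [abs_of_nonpos ha, abs_of_nonpos hb, abs_of_nonpos hc, abs_of_nonpos hd]
    linarith
  · rfl
  · exact add_comm _ _

end Resonance

/-- Resonance lemma for the half-wave equation: for integers with
`k₁ - k₂ + k₃ - k₄ = 0`, the resonance condition `|k₁| - |k₂| + |k₃| - |k₄| = 0`
holds iff all `kⱼ` are nonnegative, or all are nonpositive, or `k₁ = k₂ ∧ k₃ = k₄`,
or `k₁ = k₄ ∧ k₃ = k₂`. -/
theorem stmt0 (k₁ k₂ k₃ k₄ : ℤ) (h : k₁ - k₂ + k₃ - k₄ = 0) :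
    |k₁| - |k₂| + |k₃| - |k₄| = 0 ↔
      ((0 ≤ k₁ ∧ 0 ≤ k₂ ∧ 0 ≤ k₃ ∧ 0 ≤ k₄) ∨
       (k₁ ≤ 0 ∧ k₂ ≤ 0 ∧ k₃ ≤ 0 ∧ k₄ ≤ 0) ∨
       (k₁ = k₂ ∧ k₃ = k₄) ∨
       (k₁ = k₄ ∧ k₃ = k₂)) := by
  have hs : k₁ + k₃ = k₂ + k₄ := by linarith
  constructor
  · intro habs
    exact resonant_of_abs_add_abs_eq hs (by linarith)
  · intro hres
    linarith [abs_add_abs_eq_of_resonant hres hs]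
end

section
/- Let a, b, T > 0 and let M : [0,T] → ℝ≥0 be continuous with M(τ) ≤ a + b·M(τ)³ for all τ ∈ [0,T]. If √(3b)·M(0) < 1 and √(3b)·a < 2/3, then M(τ) ≤ (3/2)·a for all τ ∈ [0,T]. -/
/-!
Put `s = √(3b)`. As long as `s·M ≤ 1` we have `b·M³ = (3b·M²)·M/3 ≤ M/3`, so the cubic inequality
improves to `M ≤ a + M/3`, i.e. `M ≤ 3a/2`. Since `s·(3a/2) < 1`, the values of `M` can never lie in
`(3a/2, 1/s]`; `M` starts below `1/s` and is continuous, so it can never jump over this gap.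
-/

theorem IsPreconnected.forall_le_of_le_imp_le {α : Type*} [TopologicalSpace α] {S : Set α}
    {f : α → ℝ} {x₀ : α} {u c : ℝ} (hS : IsPreconnected S) (hf : ContinuousOn f S)
    (hx₀ : x₀ ∈ S) (h₀ : f x₀ ≤ c) (huc : u < c) (hgap : ∀ x ∈ S, f x ≤ c → f x ≤ u) :
    ∀ x ∈ S, f x ≤ u := by
  intro x hx
  by_contra hxu
  have hcx : c < f x := lt_of_not_ge fun hxc => hxu (hgap x hx hxc)
  obtain ⟨y, hy, hyc⟩ := hS.intermediate_value hx₀ hx hf ⟨h₀, hcx.le⟩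
  exact huc.not_ge (hyc ▸ hgap y hy hyc.le)

theorem le_of_le_add_mul_pow_three {a b x : ℝ} (hx : 0 ≤ x) (hbx : 3 * b * x ^ 2 ≤ 1)
    (h : x ≤ a + b * x ^ 3) : x ≤ 3 / 2 * a := by
  have hcube : b * x ^ 3 ≤ x / 3 := by nlinarith [mul_le_mul_of_nonneg_right hbx hx]
  linarith

theorem stmt1_general (a b T : ℝ) (hb : 0 < b)
    (M : ℝ → ℝ) (hMcont : ContinuousOn M (Set.Icc 0 T))
    (hMnonneg : ∀ τ ∈ Set.Icc (0:ℝ) T, 0 ≤ M τ)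
    (hineq : ∀ τ ∈ Set.Icc (0:ℝ) T, M τ ≤ a + b * M τ ^ 3)
    (h1 : Real.sqrt (3 * b) * M 0 < 1)
    (h2 : Real.sqrt (3 * b) * a < 2 / 3) :
    ∀ τ ∈ Set.Icc (0:ℝ) T, M τ ≤ 3 / 2 * a := by
  intro τ hτ
  set s := Real.sqrt (3 * b)
  have hs : 0 < s := Real.sqrt_pos.mpr (by positivity)
  have hs_sq : s ^ 2 = 3 * b := Real.sq_sqrt (by positivity)
  refine isPreconnected_Icc.forall_le_of_le_imp_le hMcont ⟨le_rfl, hτ.1.trans hτ.2⟩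
    ((le_div_iff₀' hs).2 h1.le) ((lt_div_iff₀' hs).2 (by linarith)) ?_ τ hτ
  intro t ht hMt
  have hsM : s * M t ≤ 1 := (le_div_iff₀' hs).1 hMt
  refine le_of_le_add_mul_pow_three (hMnonneg t ht) ?_ (hineq t ht)
  nlinarith [mul_nonneg hs.le (hMnonneg t ht)]

/-- Bootstrap lemma: if a continuous nonnegative function `M` on `[0,T]` satisfies
`M(τ) ≤ a + b M(τ)³`, with `√(3b)·M(0) < 1` and `√(3b)·a < 2/3`, then `M(τ) ≤ (3/2)a`. -/
theorem stmt1 (a b T : ℝ) (ha : 0 < a) (hb : 0 < b) (hT : 0 < T)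
    (M : ℝ → ℝ) (hMcont : ContinuousOn M (Set.Icc 0 T))
    (hMnonneg : ∀ τ ∈ Set.Icc (0:ℝ) T, 0 ≤ M τ)
    (hineq : ∀ τ ∈ Set.Icc (0:ℝ) T, M τ ≤ a + b * M τ ^ 3)
    (h1 : Real.sqrt (3 * b) * M 0 < 1)
    (h2 : Real.sqrt (3 * b) * a < 2 / 3) :
    ∀ τ ∈ Set.Icc (0:ℝ) T, M τ ≤ 3 / 2 * a :=
  stmt1_general a b T hb M hMcont hMnonneg hineq h1 h2
end
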